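/- arXiv:2103.06481 — 2 statements merged into one kernel-verified Lean document; each statement's English description precedes it below -/
import Mathlib

section
/- There exists N such that for all integers n ≥ N and every feasible vector (t₀, …, t_{2n}) for the cap set linear program, there exists a feasible vector (t₀', …, t_{2n}') with t_i' = 0 for all i > n and 3·∑_{i=0}^{2n} f_{n,i}·t_i' ≤ 3·∑_{i=0}^{2n} f_{n,i}·t_i. -/
/-- `f_{n,i}`: the coefficient of `x^i` in `(1 + x + x²)^n`. -/
noncomputable def coeff3 (n i : ℕ) : ℕ :=
  (((1 + Polynomial.X + Polynomial.X ^ 2 : Polynomial ℕ)) ^ n).coeff i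

/-- A vector `(t₀, …, t_{2n})` (given as a function on `ℕ`) is feasible for the
cap set linear program if all its entries are nonnegative and
`t_i + t_j + t_k ≥ 1` whenever `i + j + k ≤ 2n`. -/
def LPFeasible (n : ℕ) (t : ℕ → ℝ) : Prop :=
  (∀ i, i ≤ 2 * n → 0 ≤ t i) ∧
  (∀ i j k : ℕ, i + j + k ≤ 2 * n → 1 ≤ t i + t j + t k)

/-- The objective value `3 ∑_{i=0}^{2n} f_{n,i} t_i` of the cap set linear program. -/
noncomputable def LPObj (n : ℕ) (t : ℕ → ℝ) : ℝ :=
  3 * ∑ i ∈ Finset.range (2 * n + 1), (coeff3 n i : ℝ) * t i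

/-!
Replace `t` by the vector that vanishes above `n` and is raised by `t (n + 1)` at the indices
`i ≤ n / 2`. A constraint `i + j + k ≤ 2n` with an index above `n` has its other two indices
summing to less than `n`, so one of them is at most `n / 2`, and the old constraint at
`(i, j, n + 1)` covers it. The objective rises by at most `t (n + 1) ∑_{i ≤ n/2} f_{n,i}` and
falls by at least `t (n + 1) f_{n,n+1}`. The sum is at most `(133/54)^n` by Rankin's trick
(evaluate `(1 + x + x²)^n` at `x = 4/9`), whereas `f_{n,n+1} ≥ f_{n-1,n-1} ≥ 3^n / (9n)`,
because the central coefficient `f_{2m,2m} = ∑_k f_{m,k}²` is at least `9^m / (2m + 1)` by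
Cauchy–Schwarz.
-/

open Polynomial Finset Filter

namespace Polynomial

theorem reflect_pow_of_reflect_eq {R : Type*} [Semiring R] {p : R[X]} {N : ℕ}
    (hdeg : p.natDegree ≤ N) (hp : reflect N p = p) (m : ℕ) :
    reflect (N * m) (p ^ m) = p ^ m := by
  induction m with
  | zero => simp
  | succ m ih =>
    have hdeg_pow : (p ^ m).natDegree ≤ N * m :=
      (natDegree_pow_le_of_le m hdeg).trans_eq (mul_comm _ _)
    rw [pow_succ, Nat.mul_succ, reflect_mul _ _ hdeg_pow hdeg, ih, hp]

theorem sum_coeff_mul_pow_le_aeval {S : Type*} [CommSemiring S] [PartialOrder S]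
    [IsOrderedRing S] (p : ℕ[X]) {x : S} (hx₀ : 0 ≤ x) (hx₁ : x ≤ 1) {s : Finset ℕ}
    {m : ℕ} (hs : ∀ j ∈ s, j ≤ m) :
    (∑ j ∈ s, (p.coeff j : S)) * x ^ m ≤ aeval x p := by
  set N := max (m + 1) (p.natDegree + 1)
  rw [aeval_eq_sum_range' (n := N) (by omega), Finset.sum_mul]
  calc ∑ j ∈ s, (p.coeff j : S) * x ^ m
      ≤ ∑ j ∈ s, p.coeff j • x ^ j :=
        sum_le_sum fun j hj => by
          rw [nsmul_eq_mul]
          exact mul_le_mul_of_nonneg_left (pow_le_pow_of_le_one hx₀ hx₁ (hs j hj))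
            (by positivity)
    _ ≤ ∑ j ∈ range N, p.coeff j • x ^ j :=
        sum_le_sum_of_subset_of_nonneg
          (fun j hj => mem_range.2 (by have := hs j hj; omega))
          (fun _ _ _ => by positivity)

end Polynomial

local notation "Φ" => (1 + Polynomial.X + Polynomial.X ^ 2 : ℕ[X])

theorem natDegree_trinomial_pow_le (n : ℕ) : (Φ ^ n).natDegree ≤ 2 * n := by
  rw [mul_comm]
  exact natDegree_pow_le_of_le n (by compute_degree)

theorem sum_coeff3 (n : ℕ) : ∑ i ∈ range (2 * n + 1), coeff3 n i = 3 ^ n := by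
  have h := eval_eq_sum_range' (Nat.lt_succ_of_le (natDegree_trinomial_pow_le n)) 1
  simp only [one_pow, mul_one, eval_pow, eval_add, eval_one, eval_X] at h
  exact h.symm

theorem coeff3_two_mul_sub (n i : ℕ) (hi : i ≤ 2 * n) : coeff3 n (2 * n - i) = coeff3 n i := by
  have hX : reflect 2 (X : ℕ[X]) = X := by simpa using reflect_monomial (R := ℕ) 2 1
  have hΦ : reflect 2 Φ = Φ := by
    simp only [reflect_add, reflect_one, reflect_monomial, hX, revAt_le (show 2 ≤ 2 from le_rfl)]
    ring
  have h := congrArg (coeff · i) (reflect_pow_of_reflect_eq (by compute_degree) hΦ n)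
  rwa [coeff_reflect, revAt_le hi] at h

theorem coeff3_le_coeff3_succ (n i d : ℕ) (hd : d ≤ 2) :
    coeff3 n i ≤ coeff3 (n + 1) (i + d) := by
  unfold coeff3
  rw [pow_succ _ n]
  simp only [mul_add, mul_one, coeff_add]
  interval_cases d <;> simp only [add_zero, coeff_mul_X, coeff_mul_X_pow] <;> omega

theorem monotone_coeff3_diag : Monotone fun n => coeff3 n n :=
  monotone_nat_of_le_succ fun n => coeff3_le_coeff3_succ n n 1 one_le_two

theorem coeff3_two_mul_diag (m : ℕ) :
    coeff3 (2 * m) (2 * m) = ∑ k ∈ range (2 * m + 1), coeff3 m k ^ 2 := by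
  rw [coeff3, two_mul, pow_add, ← two_mul, coeff_mul, Nat.sum_antidiagonal_eq_sum_range_succ_mk]
  refine sum_congr rfl fun k hk => ?_
  change coeff3 m k * coeff3 m (2 * m - k) = _
  rw [sq, coeff3_two_mul_sub m k (Nat.lt_succ_iff.1 (mem_range.1 hk))]

theorem nine_pow_le_mul_coeff3_two_mul_diag (m : ℕ) :
    9 ^ m ≤ (2 * m + 1) * coeff3 (2 * m) (2 * m) := by
  have h := sq_sum_le_card_mul_sum_sq (s := range (2 * m + 1)) (f := coeff3 m)
  rwa [sum_coeff3, card_range, ← pow_mul, mul_comm m, pow_mul, ← coeff3_two_mul_diag] at h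

theorem three_pow_le_mul_coeff3_succ {n : ℕ} (hn : 0 < n) :
    3 ^ n ≤ 9 * n * coeff3 n (n + 1) := by
  obtain ⟨k, rfl⟩ := Nat.exists_eq_add_one_of_ne_zero hn.ne'
  have hdiag : coeff3 (2 * (k / 2)) (2 * (k / 2)) ≤ coeff3 (k + 1) (k + 2) :=
    (monotone_coeff3_diag (Nat.mul_div_le k 2)).trans (coeff3_le_coeff3_succ k k 2 le_rfl)
  calc 3 ^ (k + 1) ≤ 9 * 9 ^ (k / 2) := by
        rw [show 9 = 3 ^ 2 by rfl, ← pow_mul, ← pow_add]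
        exact Nat.pow_le_pow_right (by norm_num) (by omega)
    _ ≤ 9 * ((2 * (k / 2) + 1) * coeff3 (2 * (k / 2)) (2 * (k / 2))) :=
        Nat.mul_le_mul_left 9 (nine_pow_le_mul_coeff3_two_mul_diag _)
    _ ≤ 9 * (k + 1) * coeff3 (k + 1) (k + 2) := by
        rw [mul_assoc]
        exact Nat.mul_le_mul_left 9 (Nat.mul_le_mul (by omega) hdiag)

theorem sum_coeff3_le_of_two_mul_le (n : ℕ) {s : Finset ℕ} (hs : ∀ j ∈ s, 2 * j ≤ n) :
    ∑ j ∈ s, (coeff3 n j : ℝ) ≤ (133 / 54) ^ n := by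
  have hrankin := sum_coeff_mul_pow_le_aeval (Φ ^ n) (x := (4 / 9 : ℝ)) (by norm_num)
    (by norm_num) (m := n / 2) fun j hj => by have := hs j hj; omega
  have heval : aeval (4 / 9 : ℝ) (Φ ^ n) = (133 / 81) ^ n := by norm_num
  have hpow : (2 / 3 : ℝ) ^ n ≤ (4 / 9) ^ (n / 2) := by
    rw [show (4 / 9 : ℝ) = (2 / 3) ^ 2 by norm_num, ← pow_mul]
    exact pow_le_pow_of_le_one (by norm_num) (by norm_num) (Nat.mul_div_le n 2)
  refine le_of_mul_le_mul_right ?_ (by positivity : (0 : ℝ) < (2 / 3) ^ n)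
  calc (∑ j ∈ s, (coeff3 n j : ℝ)) * (2 / 3) ^ n
      ≤ (∑ j ∈ s, (coeff3 n j : ℝ)) * (4 / 9) ^ (n / 2) :=
        mul_le_mul_of_nonneg_left hpow (by positivity)
    _ ≤ (133 / 81) ^ n := hrankin.trans_eq heval
    _ = (133 / 54) ^ n * (2 / 3) ^ n := by rw [← mul_pow]; norm_num

theorem eventually_sum_coeff3_le_coeff3_succ :
    ∀ᶠ n in atTop, ∀ s : Finset ℕ, (∀ j ∈ s, 2 * j ≤ n) →
      ∑ j ∈ s, (coeff3 n j : ℝ) ≤ coeff3 n (n + 1) := by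
  have hdecay := (tendsto_self_mul_const_pow_of_lt_one (r := 133 / 162) (by norm_num)
    (by norm_num)).eventually_lt_const (show (0 : ℝ) < 1 / 9 by norm_num)
  filter_upwards [hdecay, eventually_gt_atTop 0] with n hsmall hn s hs
  have hlower : (3 : ℝ) ^ n ≤ 9 * n * coeff3 n (n + 1) := by
    exact_mod_cast three_pow_le_mul_coeff3_succ hn
  refine le_of_mul_le_mul_left ?_ (by positivity : (0 : ℝ) < 9 * n)
  calc 9 * n * ∑ j ∈ s, (coeff3 n j : ℝ)
      ≤ 9 * n * (133 / 54) ^ n :=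
        mul_le_mul_of_nonneg_left (sum_coeff3_le_of_two_mul_le n hs) (by positivity)
    _ = 9 * (n * (133 / 162) ^ n) * 3 ^ n := by
        rw [show (133 / 54 : ℝ) = 133 / 162 * 3 by norm_num, mul_pow]; ring
    _ ≤ 3 ^ n := by nlinarith [pow_pos (show (0 : ℝ) < 3 by norm_num) n]
    _ ≤ 9 * n * coeff3 n (n + 1) := hlower

def truncateBoost (n : ℕ) (t : ℕ → ℝ) (i : ℕ) : ℝ :=
  if n < i then 0 else if 2 * i ≤ n then t i + t (n + 1) else t i

section truncateBoost

variable {n : ℕ} {t : ℕ → ℝ}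

theorem truncateBoost_of_lt {i : ℕ} (hi : n < i) : truncateBoost n t i = 0 := if_pos hi

theorem lpFeasible_truncateBoost (hn : 0 < n) (ht : LPFeasible n t) :
    LPFeasible n (truncateBoost n t) := by
  obtain ⟨hnonneg, htriple⟩ := ht
  have hc : 0 ≤ t (n + 1) := hnonneg _ (by omega)
  have hle : ∀ i ≤ n, t i ≤ truncateBoost n t i := by
    intro i hi
    unfold truncateBoost
    split_ifs <;> first | omega | linarith
  have hpair : ∀ i j, i + j < n → 1 ≤ truncateBoost n t i + truncateBoost n t j := by
    intro i j hij
    have := htriple i j (n + 1) (by omega)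
    unfold truncateBoost
    split_ifs <;> first | omega | linarith
  refine ⟨fun i hi => ?_, fun i j k hijk => ?_⟩
  · unfold truncateBoost
    split_ifs <;> linarith [hnonneg i hi]
  · by_cases hi : n < i
    · linarith [truncateBoost_of_lt (t := t) hi, hpair j k (by omega)]
    by_cases hj : n < j
    · linarith [truncateBoost_of_lt (t := t) hj, hpair i k (by omega)]
    by_cases hk : n < k
    · linarith [truncateBoost_of_lt (t := t) hk, hpair i j (by omega)]
    linarith [htriple i j k hijk, hle i (by omega), hle j (by omega), hle k (by omega)]

theorem lpObj_truncateBoost_le (hn : 0 < n) (ht : LPFeasible n t)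
    (hsum : ∑ j ∈ (range (2 * n + 1)).filter (2 * · ≤ n), (coeff3 n j : ℝ) ≤
      coeff3 n (n + 1)) :
    LPObj n (truncateBoost n t) ≤ LPObj n t := by
  have hc : 0 ≤ t (n + 1) := ht.1 _ (by omega)
  have hterm : ∀ i, (coeff3 n i : ℝ) * truncateBoost n t i = coeff3 n i * t i
      + (if 2 * i ≤ n then (coeff3 n i : ℝ) * t (n + 1) else 0)
      - (if n < i then (coeff3 n i : ℝ) * t i else 0) := by
    intro i
    unfold truncateBoost
    split_ifs <;> first | omega | ring
  have hgain : ∑ i ∈ (range (2 * n + 1)).filter (2 * · ≤ n), (coeff3 n i : ℝ) * t (n + 1)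
      ≤ ∑ i ∈ (range (2 * n + 1)).filter (n < ·), (coeff3 n i : ℝ) * t i :=
    calc _ = (∑ i ∈ (range (2 * n + 1)).filter (2 * · ≤ n), (coeff3 n i : ℝ)) *
          t (n + 1) := (sum_mul ..).symm
      _ ≤ coeff3 n (n + 1) * t (n + 1) := mul_le_mul_of_nonneg_right hsum hc
      _ ≤ _ := single_le_sum (f := fun i => (coeff3 n i : ℝ) * t i)
          (fun i hi => mul_nonneg (Nat.cast_nonneg _)
            (ht.1 i (by simp only [mem_filter, mem_range] at hi; omega)))
          (by simp only [mem_filter, mem_range]; omega)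
  unfold LPObj
  simp only [hterm, sum_add_distrib, sum_sub_distrib, ← sum_filter]
  linarith

end truncateBoost

/-- For large `n`, any feasible vector can be improved to one vanishing above `n`. -/
theorem lp_improve_above_n :
    ∃ N : ℕ, ∀ n : ℕ, N ≤ n → ∀ t : ℕ → ℝ, LPFeasible n t →
      ∃ t' : ℕ → ℝ, LPFeasible n t' ∧ (∀ i, n < i → i ≤ 2 * n → t' i = 0) ∧
        LPObj n t' ≤ LPObj n t := by
  obtain ⟨N, hN⟩ := eventually_atTop.1
    (eventually_sum_coeff3_le_coeff3_succ.and (eventually_gt_atTop 0))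
  refine ⟨N, fun n hn t ht => ?_⟩
  obtain ⟨hsum, hn⟩ := hN n hn
  exact ⟨truncateBoost n t, lpFeasible_truncateBoost hn ht, fun i hi _ => truncateBoost_of_lt hi,
    lpObj_truncateBoost_le hn ht (hsum _ fun j hj => (mem_filter.1 hj).2)⟩
end

section
/- There exists S such that for all integers s ≥ S, setting n = 3s, the vector (t₀*, …, t_{2n}*) defined by t_i* = 1 for 0 ≤ i ≤ 2s − 2, t_{2s−1}* = 2/3, t_{2s}* = 1/3, and t_i* = 0 for i ≥ 2s + 1, is an optimal solution of the cap set linear program: it is feasible, and every feasible vector (t₀, …, t_{2n}) satisfies 3·∑_{i=0}^{2n} f_{n,i}·t_i ≥ 3·∑_{i=0}^{2n} f_{n,i}·t_i*. -/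
/-!
Weak duality with an explicit dual solution. Write `f i = f_{3s,i}`. For `a ≤ 2s - 2` take the
constraint on `(a, 3s - ⌊a/2⌋, 3s - ⌈a/2⌉)` with weight `f a`, the one on `(2s-1, 2s, 2s+1)` with
weight `f (2s-1)`, and the one on `(2s, 2s, 2s)` with weight `(f (2s) - f (2s-1)) / 3`. The total
weight is a third of the objective value of the claimed optimum, so it suffices that the weight
resting on each index `i` is at most `f i`. Below `2s + 1` this holds with equality; `2s + 1`
carries `f (2s-3) + 2 f (2s-2) + f (2s-1) ≤ f (2s+1)`, and an index in `[2s+2, 3s]` carries at most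
`4 f (2s-3) ≤ f (2s+2)`. Both inequalities follow from the unimodality of `i ↦ f_{n,i}` and the
recurrence `(j+2) f_{n,j+2} = (n-j-1) f_{n,j+1} + (2n-j) f_{n,j}`, which comes from
`P · (P^n)' = n P' P^n` for `P = 1 + X + X²`.
-/

open Polynomial Finset

lemma coeff_mul_one_add_X_add_X_sq {R : Type*} [Semiring R] (q : R[X]) (i : ℕ) :
    (q * (1 + X + X ^ 2)).coeff i =
      q.coeff i + (if 1 ≤ i then q.coeff (i - 1) else 0) +
        (if 2 ≤ i then q.coeff (i - 2) else 0) := by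
  rw [show q * (1 + X + X ^ 2) = q + q * X ^ 1 + q * X ^ 2 by
    rw [mul_add, mul_add, mul_one, pow_one]]
  simp only [coeff_add, coeff_mul_X_pow']

lemma natDegree_one_add_X_add_X_sq_pow_le {R : Type*} [Semiring R] (n : ℕ) :
    ((1 + X + X ^ 2 : R[X]) ^ n).natDegree ≤ 2 * n :=
  (natDegree_pow_le_of_le n (by compute_degree)).trans_eq (mul_comm _ _)

lemma reflect_one_add_X_add_X_sq_pow {R : Type*} [Semiring R] (n : ℕ) :
    reflect (2 * n) ((1 + X + X ^ 2 : R[X]) ^ n) = (1 + X + X ^ 2) ^ n := by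
  induction n with
  | zero => simp
  | succ n ih =>
    have h0 : reflect 2 (1 : R[X]) = X ^ 2 := by simp
    have h1 : reflect 2 (X : R[X]) = X := by
      simpa [revAt_le] using reflect_monomial (R := R) 2 1
    have h2 : reflect 2 (X ^ 2 : R[X]) = 1 := by simp [revAt_le]
    rw [pow_succ, mul_add_one, reflect_mul _ _ (natDegree_one_add_X_add_X_sq_pow_le n)
      (by compute_degree), ih, reflect_add, reflect_add, h0, h1, h2, add_comm _ (1 : R[X]),
      add_comm (X ^ 2) X, add_assoc]

lemma one_add_X_add_X_sq_mul_derivative_pow {R : Type*} [CommSemiring R] (n : ℕ) :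
    (1 + X + X ^ 2 : R[X]) * derivative ((1 + X + X ^ 2) ^ n) =
      (n : R[X]) * (1 + 2 * X) * (1 + X + X ^ 2) ^ n := by
  rcases n with _ | n
  · simp
  · rw [derivative_pow, derivative_add, derivative_add, derivative_one, derivative_X,
      derivative_X_sq, Nat.add_sub_cancel, C_eq_natCast, map_ofNat C 2, pow_succ]
    push_cast
    ring

lemma coeff3_succ (n i : ℕ) :
    coeff3 (n + 1) i = coeff3 n i + (if 1 ≤ i then coeff3 n (i - 1) else 0) +
        (if 2 ≤ i then coeff3 n (i - 2) else 0) := by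
  rw [coeff3, pow_succ, coeff_mul_one_add_X_add_X_sq]
  rfl

lemma coeff3_symm {n i : ℕ} (h : i ≤ 2 * n) : coeff3 n (2 * n - i) = coeff3 n i := by
  rw [coeff3, ← reflect_one_add_X_add_X_sq_pow, coeff_reflect, revAt_le (by omega),
    Nat.sub_sub_self h]
  rfl

lemma coeff3_monotoneOn (n : ℕ) : MonotoneOn (coeff3 n) (Set.Iic n) := by
  induction n with
  | zero => simp [MonotoneOn]
  | succ n ih =>
    refine monotoneOn_of_le_add_one Set.ordConnected_Iic fun a _ _ ha => ?_
    have ha : a ≤ n := by simpa using ha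
    suffices (if 2 ≤ a then coeff3 n (a - 2) else 0) ≤ coeff3 n (a + 1) by
      simp only [coeff3_succ, if_pos (Nat.le_add_left 1 a), Nat.add_sub_cancel,
        show 2 ≤ a + 1 ↔ 1 ≤ a by omega, show a + 1 - 2 = a - 1 by omega]
      omega
    split_ifs with h2
    · rcases ha.lt_or_eq with ha | rfl
      · exact ih (by rw [Set.mem_Iic]; omega) (by rwa [Set.mem_Iic]) (by omega)
      · rw [← coeff3_symm (n := a) (i := a + 1) (by omega),
          show 2 * a - (a + 1) = a - 1 by omega]
        exact ih (by rw [Set.mem_Iic]; omega) (by rw [Set.mem_Iic]; omega) (by omega)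
    · exact Nat.zero_le _

lemma coeff3_le_coeff3 {n i j : ℕ} (hij : i ≤ j) (hj : j ≤ n) :
    (coeff3 n i : ℝ) ≤ coeff3 n j := by
  exact_mod_cast coeff3_monotoneOn n (Set.mem_Iic.2 (hij.trans hj)) (Set.mem_Iic.2 hj) hij

lemma coeff3_recurrence_nat (n j : ℕ) :
    (j + 2) * coeff3 n (j + 2) + (j + 1) * coeff3 n (j + 1) + j * coeff3 n j =
      n * coeff3 n (j + 1) + 2 * n * coeff3 n j := by
  have h := congrArg (coeff · (j + 1)) (one_add_X_add_X_sq_mul_derivative_pow (R := ℕ) n)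
  simp only [mul_comm (1 + X + X ^ 2 : ℕ[X]), coeff_mul_one_add_X_add_X_sq, coeff_derivative] at h
  rw [mul_assoc, coeff_natCast_mul, add_mul, one_mul, coeff_add, mul_assoc, coeff_ofNat_mul,
    coeff_X_mul] at h
  rcases j with _ | j <;> simp [coeff3] at h ⊢ <;> linarith

lemma coeff3_recurrence (n j : ℕ) :
    ((j : ℝ) + 2) * coeff3 n (j + 2) =
      (n - j - 1) * coeff3 n (j + 1) + (2 * n - j) * coeff3 n j := by
  have h : ((j + 2 : ℕ) : ℝ) * coeff3 n (j + 2) + ((j + 1 : ℕ) : ℝ) * coeff3 n (j + 1) +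
      (j : ℝ) * coeff3 n j = (n : ℝ) * coeff3 n (j + 1) + 2 * n * coeff3 n j := by
    exact_mod_cast coeff3_recurrence_nat n j
  push_cast at h
  linear_combination h

lemma sum_range_eq_add_add_add_sum_Ico {M : Type*} [AddCommMonoid M] (x : ℕ → M) {k N : ℕ}
    (hk : 1 ≤ k) (hN : k < N) :
    ∑ i ∈ range N, x i =
      ∑ i ∈ range (k - 1), x i + x (k - 1) + x k + ∑ i ∈ Ico (k + 1) N, x i := by
  obtain ⟨j, rfl⟩ : ∃ j, k = j + 1 := ⟨k - 1, by omega⟩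
  rw [← sum_range_add_sum_Ico x hN, sum_range_succ, sum_range_succ, Nat.add_sub_cancel]

lemma sum_mul_comp_eq_sum_fiberwise {ι κ R : Type*} [DecidableEq κ]
    [NonUnitalNonAssocSemiring R]
    {A : Finset ι} {I : Finset κ} {g : ι → κ} (h : ∀ a ∈ A, g a ∈ I) (w : ι → R) (t : κ → R) :
    ∑ a ∈ A, w a * t (g a) = ∑ i ∈ I, (∑ a ∈ A with g a = i, w a) * t i := by
  rw [← sum_fiberwise_of_maps_to h]
  refine sum_congr rfl fun i _ => ?_
  rw [sum_mul]
  exact sum_congr rfl fun a ha => by rw [(mem_filter.1 ha).2]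

namespace CapSetLP

variable {s : ℕ}

/-- Eliminate `f (2s+2)` and `f (2s)` with the recurrence; monotonicity gives
`(2s+2) f (2s+2) ≥ (5s-1) f (2s)` and `2s f (2s) ≥ (5s+3) f (2s-3)`. -/
lemma four_mul_coeff3_le_coeff3_two_mul_add_two (hs : 2 ≤ s) :
    4 * (coeff3 (3 * s) (2 * s - 3) : ℝ) ≤ coeff3 (3 * s) (2 * s + 2) := by
  obtain ⟨m, rfl⟩ : ∃ m, s = m + 2 := ⟨s - 2, by omega⟩
  rw [show 2 * (m + 2) - 3 = 2 * m + 1 by omega, show 2 * (m + 2) + 2 = 2 * m + 6 by omega]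
  have r6 := coeff3_recurrence (3 * (m + 2)) (2 * m + 4)
  have r4 := coeff3_recurrence (3 * (m + 2)) (2 * m + 2)
  have m5 := coeff3_le_coeff3 (n := 3 * (m + 2)) (Nat.le_succ (2 * m + 4)) (by omega)
  have m3 := coeff3_le_coeff3 (n := 3 * (m + 2)) (Nat.le_succ (2 * m + 2)) (by omega)
  have m2 := coeff3_le_coeff3 (n := 3 * (m + 2)) (Nat.le_succ (2 * m + 1)) (by omega)
  push_cast at r6 r4
  nlinarith

/-- Eliminating `f (2s+1)`, `f (2s)` and `f (2s-1)` with the recurrence leaves an inequality between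
`f (2s-2)` and `f (2s-3)` that follows from `(2s-2) f (2s-2) ≤ (5s+7) f (2s-3)`, i.e. from the
recurrence at `2s-3` and `f (2s-4) ≤ f (2s-3)`. -/
lemma sum_coeff3_le_coeff3_two_mul_add_one (hs : 2 ≤ s) :
    (coeff3 (3 * s) (2 * s - 3) : ℝ) + 2 * coeff3 (3 * s) (2 * s - 2) + coeff3 (3 * s) (2 * s - 1)
      ≤ coeff3 (3 * s) (2 * s + 1) := by
  obtain ⟨m, rfl⟩ : ∃ m, s = m + 2 := ⟨s - 2, by omega⟩
  rw [show 2 * (m + 2) - 3 = 2 * m + 1 by omega, show 2 * (m + 2) - 2 = 2 * m + 2 by omega,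
    show 2 * (m + 2) - 1 = 2 * m + 3 by omega, show 2 * (m + 2) + 1 = 2 * m + 5 by omega]
  have r5 := coeff3_recurrence (3 * (m + 2)) (2 * m + 3)
  have r4 := coeff3_recurrence (3 * (m + 2)) (2 * m + 2)
  have r3 := coeff3_recurrence (3 * (m + 2)) (2 * m + 1)
  have r2 := coeff3_recurrence (3 * (m + 2)) (2 * m)
  have m1 := coeff3_le_coeff3 (n := 3 * (m + 2)) (Nat.le_succ (2 * m)) (by omega)
  push_cast at r5 r4 r3 r2
  nlinarith

noncomputable def LPOptimum (s : ℕ) : ℕ → ℝ := fun i => if i ≤ 2 * s - 2 then 1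
  else if i = 2 * s - 1 then 2 / 3 else if i = 2 * s then 1 / 3 else 0

lemma LPOptimum_nonneg (i : ℕ) : 0 ≤ LPOptimum s i := by
  unfold LPOptimum
  split_ifs <;> norm_num

lemma LPOptimum_of_le {i : ℕ} (hi : i ≤ 2 * s - 2) : LPOptimum s i = 1 := if_pos hi

lemma LPOptimum_of_lt {i : ℕ} (hi : 2 * s < i) : LPOptimum s i = 0 := by
  rw [LPOptimum, if_neg (by omega), if_neg (by omega), if_neg (by omega)]

lemma le_LPOptimum (hs : 1 ≤ s) {i : ℕ} (hi : 2 * s - 2 < i) :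
    (2 * s + 1 - i : ℝ) / 3 ≤ LPOptimum s i := by
  unfold LPOptimum
  rw [if_neg hi.not_ge]
  split_ifs with h1 h2
  · rw [h1, Nat.cast_sub (by omega)]
    norm_num
  · rw [h2]
    norm_num
  · have : (2 * s + 1 : ℝ) ≤ i := by exact_mod_cast (show 2 * s + 1 ≤ i by omega)
    linarith

lemma LPFeasible_LPOptimum (hs : 1 ≤ s) : LPFeasible (3 * s) (LPOptimum s) := by
  refine ⟨fun i _ => LPOptimum_nonneg i, fun i j k hijk => ?_⟩
  have hi := LPOptimum_nonneg (s := s) i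
  have hj := LPOptimum_nonneg (s := s) j
  have hk := LPOptimum_nonneg (s := s) k
  rcases le_or_gt i (2 * s - 2) with hi' | hi'
  · linarith [LPOptimum_of_le hi']
  rcases le_or_gt j (2 * s - 2) with hj' | hj'
  · linarith [LPOptimum_of_le hj']
  rcases le_or_gt k (2 * s - 2) with hk' | hk'
  · linarith [LPOptimum_of_le hk']
  have hsum : (i + j + k : ℝ) ≤ 6 * s := by exact_mod_cast (show i + j + k ≤ 6 * s by omega)
  linarith [le_LPOptimum hs hi', le_LPOptimum hs hj', le_LPOptimum hs hk']

lemma LPObj_LPOptimum (hs : 1 ≤ s) :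
    LPObj (3 * s) (LPOptimum s) = 3 * (∑ a ∈ range (2 * s - 1), (coeff3 (3 * s) a : ℝ) +
      2 / 3 * coeff3 (3 * s) (2 * s - 1) + 1 / 3 * coeff3 (3 * s) (2 * s)) := by
  have h_low : ∀ a ∈ range (2 * s - 1),
      (coeff3 (3 * s) a : ℝ) * LPOptimum s a = coeff3 (3 * s) a :=
    fun a ha => by rw [LPOptimum_of_le (by rw [mem_range] at ha; omega), mul_one]
  have h_high : ∀ i ∈ Ico (2 * s + 1) (2 * (3 * s) + 1),
      (coeff3 (3 * s) i : ℝ) * LPOptimum s i = 0 :=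
    fun i hi => by rw [LPOptimum_of_lt (by rw [mem_Ico] at hi; omega), mul_zero]
  have h_pred : LPOptimum s (2 * s - 1) = 2 / 3 := by
    rw [LPOptimum, if_neg (by omega), if_pos rfl]
  have h_mid : LPOptimum s (2 * s) = 1 / 3 := by
    rw [LPOptimum, if_neg (by omega), if_neg (by omega), if_pos rfl]
  rw [LPObj, sum_range_eq_add_add_add_sum_Ico _ (show 1 ≤ 2 * s by omega) (by omega),
    sum_congr rfl h_low, sum_eq_zero h_high, h_pred, h_mid]
  ring

/-- The pairs `(a, 0)` and `(a, 1)` encode the two partners `3s - ⌊a/2⌋` and `3s - ⌈a/2⌉` of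
`a ≤ 2s - 2` in the dual solution; `a` and its partners sum to `6s`. -/
def partner (s : ℕ) (p : ℕ × ℕ) : ℕ := 3 * s - (p.1 + p.2) / 2

lemma partner_mem_Ico {p : ℕ × ℕ} (hp : p ∈ range (2 * s - 1) ×ˢ range 2) :
    partner s p ∈ Ico (2 * s + 1) (3 * s + 1) := by
  simp only [mem_product, mem_range] at hp
  simp only [partner, mem_Ico]
  omega

lemma sum_partner_fiber_two_mul_add_one (hs : 2 ≤ s) :
    ∑ p ∈ range (2 * s - 1) ×ˢ range 2 with partner s p = 2 * s + 1, (coeff3 (3 * s) p.1 : ℝ) =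
      coeff3 (3 * s) (2 * s - 3) + 2 * coeff3 (3 * s) (2 * s - 2) := by
  have h_fiber : {p ∈ range (2 * s - 1) ×ˢ range 2 | partner s p = 2 * s + 1} =
      {(2 * s - 3, 1), (2 * s - 2, 0), (2 * s - 2, 1)} := by
    ext ⟨a, e⟩
    simp only [mem_filter, mem_product, mem_range, mem_insert, mem_singleton, Prod.mk.injEq]
    unfold partner
    omega
  rw [h_fiber, sum_insert (by simp only [mem_insert, mem_singleton, Prod.mk.injEq]; omega),
    sum_pair (by simp)]
  ring

lemma sum_partner_fiber_le {i : ℕ} (hi : 2 * s + 1 < i) :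
    ∑ p ∈ range (2 * s - 1) ×ˢ range 2 with partner s p = i, (coeff3 (3 * s) p.1 : ℝ) ≤
      4 * coeff3 (3 * s) (2 * s - 3) := by
  set m := 3 * s - i
  have h_sub : {p ∈ range (2 * s - 1) ×ˢ range 2 | partner s p = i} ⊆
      {(2 * m - 1, 1), (2 * m, 0), (2 * m, 1), (2 * m + 1, 0)} := by
    rintro ⟨a, e⟩ h
    simp only [mem_filter, mem_product, mem_range] at h
    simp only [mem_insert, mem_singleton, Prod.mk.injEq]
    unfold partner at h
    omega
  calc ∑ p ∈ range (2 * s - 1) ×ˢ range 2 with partner s p = i, (coeff3 (3 * s) p.1 : ℝ)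
      ≤ ∑ p ∈ range (2 * s - 1) ×ˢ range 2 with partner s p = i,
          (coeff3 (3 * s) (2 * s - 3) : ℝ) := by
        refine sum_le_sum fun p hp => coeff3_le_coeff3 ?_ (by omega)
        simp only [mem_filter, mem_product, mem_range] at hp
        unfold partner at hp
        omega
    _ ≤ 4 * coeff3 (3 * s) (2 * s - 3) := by
        rw [sum_const, nsmul_eq_mul]
        gcongr
        exact_mod_cast (card_le_card h_sub).trans card_le_four

lemma sum_mul_partner_le (hs : 2 ≤ s) {t : ℕ → ℝ} (ht : ∀ i, i ≤ 2 * (3 * s) → 0 ≤ t i) :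
    coeff3 (3 * s) (2 * s - 1) * t (2 * s + 1) +
        ∑ p ∈ range (2 * s - 1) ×ˢ range 2, (coeff3 (3 * s) p.1 : ℝ) * t (partner s p) ≤
      ∑ i ∈ Ico (2 * s + 1) (3 * s + 1), (coeff3 (3 * s) i : ℝ) * t i := by
  have h_point : (coeff3 (3 * s) (2 * s - 1) : ℝ) * t (2 * s + 1) =
      ∑ i ∈ Ico (2 * s + 1) (3 * s + 1),
        (if i = 2 * s + 1 then (coeff3 (3 * s) (2 * s - 1) : ℝ) else 0) * t i := by
    simp only [ite_zero_mul]
    rw [sum_ite_eq', if_pos (by rw [mem_Ico]; omega)]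
  rw [h_point, sum_mul_comp_eq_sum_fiberwise (fun p hp => partner_mem_Ico hp),
    ← sum_add_distrib]
  refine sum_le_sum fun i hi => ?_
  rw [mem_Ico] at hi
  rw [← add_mul]
  refine mul_le_mul_of_nonneg_right ?_ (ht i (by omega))
  rcases eq_or_lt_of_le hi.1 with rfl | hi'
  · rw [if_pos rfl, sum_partner_fiber_two_mul_add_one hs]
    linarith [sum_coeff3_le_coeff3_two_mul_add_one hs]
  · rw [if_neg hi'.ne']
    linarith [sum_partner_fiber_le hi', four_mul_coeff3_le_coeff3_two_mul_add_two hs,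
      coeff3_le_coeff3 (n := 3 * s) (show 2 * s + 2 ≤ i by omega) (by omega)]

lemma le_LPObj_of_LPFeasible (hs : 2 ≤ s) {t : ℕ → ℝ} (ht : LPFeasible (3 * s) t) :
    3 * (∑ a ∈ range (2 * s - 1), (coeff3 (3 * s) a : ℝ) +
      2 / 3 * coeff3 (3 * s) (2 * s - 1) + 1 / 3 * coeff3 (3 * s) (2 * s)) ≤ LPObj (3 * s) t := by
  obtain ⟨t_nonneg, t_cover⟩ := ht
  have h_tail : ∑ i ∈ Ico (2 * s + 1) (3 * s + 1), (coeff3 (3 * s) i : ℝ) * t i ≤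
      ∑ i ∈ Ico (2 * s + 1) (2 * (3 * s) + 1), (coeff3 (3 * s) i : ℝ) * t i :=
    sum_le_sum_of_subset_of_nonneg (Ico_subset_Ico_right (by omega)) fun i hi _ =>
      mul_nonneg (Nat.cast_nonneg _) (t_nonneg i (by rw [mem_Ico] at hi; omega))
  have h_triples : ∑ a ∈ range (2 * s - 1), (coeff3 (3 * s) a : ℝ) ≤
      ∑ a ∈ range (2 * s - 1), (coeff3 (3 * s) a : ℝ) * t a +
        ∑ p ∈ range (2 * s - 1) ×ˢ range 2, (coeff3 (3 * s) p.1 : ℝ) * t (partner s p) := by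
    rw [sum_product, ← sum_add_distrib]
    refine sum_le_sum fun a ha => ?_
    rw [mem_range] at ha
    have h_cover := t_cover a (partner s (a, 0)) (partner s (a, 1)) (by unfold partner; omega)
    simp only [sum_range_succ, sum_range_zero, zero_add]
    linarith [mul_le_mul_of_nonneg_left h_cover (Nat.cast_nonneg (coeff3 (3 * s) a))]
  have h_pred := mul_le_mul_of_nonneg_left (t_cover (2 * s - 1) (2 * s) (2 * s + 1) (by omega))
    (Nat.cast_nonneg (coeff3 (3 * s) (2 * s - 1)) : (0 : ℝ) ≤ _)
  have h_mid := mul_le_mul_of_nonneg_left (t_cover (2 * s) (2 * s) (2 * s) (by omega))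
    (sub_nonneg.2 (coeff3_le_coeff3 (n := 3 * s) (show 2 * s - 1 ≤ 2 * s by omega) (by omega)))
  rw [LPObj, sum_range_eq_add_add_add_sum_Ico (fun i => (coeff3 (3 * s) i : ℝ) * t i)
    (show 1 ≤ 2 * s by omega) (by omega)]
  linarith [sum_mul_partner_le hs t_nonneg]

end CapSetLP

/-- For `n = 3s` with `s` large, the vector with `tᵢ = 1` for `i ≤ 2s-2`,
`t_{2s-1} = 2/3`, `t_{2s} = 1/3` and `tᵢ = 0` for `i ≥ 2s+1` is an optimal
solution of the cap set linear program. -/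
theorem lp_optimal_three_s :
    ∃ S : ℕ, ∀ s : ℕ, S ≤ s →
      LPFeasible (3 * s) (fun i => if i ≤ 2 * s - 2 then 1
        else if i = 2 * s - 1 then 2 / 3 else if i = 2 * s then 1 / 3 else 0) ∧
      ∀ t : ℕ → ℝ, LPFeasible (3 * s) t →
        LPObj (3 * s) (fun i => if i ≤ 2 * s - 2 then 1
          else if i = 2 * s - 1 then 2 / 3 else if i = 2 * s then 1 / 3 else 0) ≤
        LPObj (3 * s) t := by
  refine ⟨2, fun s hs => ⟨CapSetLP.LPFeasible_LPOptimum (by omega), fun t ht => ?_⟩⟩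
  exact (CapSetLP.LPObj_LPOptimum (by omega)).trans_le (CapSetLP.le_LPObj_of_LPFeasible hs ht)
end
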